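/- Let U, V ⊆ ℂ be open, ξ₀, η₀ : U → ℂ real-differentiable, r₀ : U → ℝ real-differentiable satisfying ∂̄r₀ = 2(η₀·∂̄ξ̄₀ + η̄₀·∂̄ξ₀)/(1 + ξ₀ξ̄₀)² on U, and let φ : V → U be real-differentiable. Then the compositions satisfy the same relation: ∂̄(r₀∘φ) = 2((η₀∘φ)·∂̄(ξ̄₀∘φ) + (η̄₀∘φ)·∂̄(ξ₀∘φ))/(1 + (ξ₀∘φ)(ξ̄₀∘φ))² on V. (The potential equation for a surface is invariant under arbitrary real-differentiable reparameterization, because r₀ is real-valued.) -/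

import Mathlib

open ComplexConjugate

/-- The conjugate Wirtinger derivative `∂̄f` of a real-differentiable `f : ℂ → ℂ`. -/
noncomputable def wirtDbar (f : ℂ → ℂ) (ν : ℂ) : ℂ :=
  (1 / 2) * (fderiv ℝ f ν 1 + Complex.I * fderiv ℝ f ν Complex.I)

/-- The Wirtinger derivative `∂f`. -/
noncomputable def wirtD (f : ℂ → ℂ) (ν : ℂ) : ℂ :=
  (1 / 2) * (fderiv ℝ f ν 1 - Complex.I * fderiv ℝ f ν Complex.I)

lemma clm_decomp (G : ℂ →L[ℝ] ℂ) (w : ℂ) :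
    G w = (1/2) * (G 1 - Complex.I * G Complex.I) * w
        + (1/2) * (G 1 + Complex.I * G Complex.I) * conj w := by
  have key : ∀ x y a b : ℂ, x * a + y * b =
      (1/2) * (a - Complex.I * b) * (x + y * Complex.I)
      + (1/2) * (a + Complex.I * b) * (x - y * Complex.I) := by
    intro x y a b
    linear_combination y * b * Complex.I_mul_I
  have hw : w = (w.re : ℝ) • (1 : ℂ) + (w.im : ℝ) • Complex.I := by
    simp [Complex.real_smul, Complex.re_add_im]
  have h1 : G w = (w.re : ℂ) * G 1 + (w.im : ℂ) * G Complex.I := by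
    conv_lhs => rw [hw]
    rw [map_add, map_smul, map_smul]
    simp [Complex.real_smul]
  have hcw : conj w = (w.re : ℂ) - (w.im : ℂ) * Complex.I := by
    simp [Complex.ext_iff]
  rw [h1, hcw, key (w.re : ℂ) (w.im : ℂ) (G 1) (G Complex.I), Complex.re_add_im]

lemma wirt_comp {g φ : ℂ → ℂ} {ν : ℂ} (hg : DifferentiableAt ℝ g (φ ν))
    (hφ : DifferentiableAt ℝ φ ν) :
    wirtDbar (fun w => g (φ w)) ν =
      wirtD g (φ ν) * wirtDbar φ ν + wirtDbar g (φ ν) * conj (wirtD φ ν) := by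
  have hf : fderiv ℝ (fun w => g (φ w)) ν =
      (fderiv ℝ g (φ ν)).comp (fderiv ℝ φ ν) := fderiv_comp ν hg hφ
  simp only [wirtDbar, wirtD, hf, ContinuousLinearMap.comp_apply]
  rw [clm_decomp (fderiv ℝ g (φ ν)) (fderiv ℝ φ ν 1),
      clm_decomp (fderiv ℝ g (φ ν)) (fderiv ℝ φ ν Complex.I)]
  simp only [map_mul, map_sub, map_add, map_one, map_div₀, map_ofNat, Complex.conj_I]
  ring

lemma wirtDbar_conj {g : ℂ → ℂ} {ν : ℂ} (hg : DifferentiableAt ℝ g ν) :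
    wirtDbar (fun w => conj (g w)) ν = conj (wirtD g ν) := by
  have hf : fderiv ℝ (fun w => conj (g w)) ν =
      (Complex.conjCLE.toContinuousLinearMap).comp (fderiv ℝ g ν) := by
    have := fderiv_comp ν (Complex.conjCLE.toContinuousLinearMap.differentiableAt
      (x := g ν)) hg
    rw [ContinuousLinearMap.fderiv] at this
    exact this
  simp only [wirtDbar, wirtD, hf, ContinuousLinearMap.comp_apply,
    ContinuousLinearEquiv.coe_coe, Complex.conjCLE_apply]
  simp only [map_mul, map_sub, map_add, map_one, map_div₀, map_ofNat, Complex.conj_I,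
    RingHomCompTriple.comp_apply, Complex.conj_conj]
  ring

lemma wirtD_conj {g : ℂ → ℂ} {ν : ℂ} (hg : DifferentiableAt ℝ g ν) :
    wirtD (fun w => conj (g w)) ν = conj (wirtDbar g ν) := by
  have hf : fderiv ℝ (fun w => conj (g w)) ν =
      (Complex.conjCLE.toContinuousLinearMap).comp (fderiv ℝ g ν) := by
    have := fderiv_comp ν (Complex.conjCLE.toContinuousLinearMap.differentiableAt
      (x := g ν)) hg
    rw [ContinuousLinearMap.fderiv] at this
    exact this
  simp only [wirtDbar, wirtD, hf, ContinuousLinearMap.comp_apply,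
    ContinuousLinearEquiv.coe_coe, Complex.conjCLE_apply]
  simp only [map_mul, map_sub, map_add, map_one, map_div₀, map_ofNat, Complex.conj_I,
    Complex.conj_conj]
  ring

lemma wirtD_real {r : ℂ → ℝ} {ν : ℂ} (hr : DifferentiableAt ℝ r ν) :
    wirtD (fun w => (r w : ℂ)) ν = conj (wirtDbar (fun w => (r w : ℂ)) ν) := by
  have hf : fderiv ℝ (fun w => (r w : ℂ)) ν =
      Complex.ofRealCLM.comp (fderiv ℝ r ν) := by
    have := fderiv_comp ν (Complex.ofRealCLM.differentiableAt (x := r ν)) hr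
    rw [ContinuousLinearMap.fderiv] at this
    exact this
  simp only [wirtDbar, wirtD, hf, ContinuousLinearMap.comp_apply, Complex.ofRealCLM_apply]
  simp only [map_mul, map_sub, map_add, map_one, map_div₀, map_ofNat, Complex.conj_I,
    Complex.conj_ofReal]
  ring

/-- the potential equation `∂̄r₀ = 2(η₀∂̄ξ̄₀ + η̄₀∂̄ξ₀)/(1 + ξ₀ξ̄₀)²`
for a surface is invariant under arbitrary real-differentiable reparameterization
`φ : V → U`, because `r₀` is real-valued. -/
theorem potential_equation_reparameterization (U V : Set ℂ)
    (hU : IsOpen U) (hV : IsOpen V)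
    (ξ₀ η₀ : ℂ → ℂ) (r₀ : ℂ → ℝ) (φ : ℂ → ℂ)
    (hφmaps : Set.MapsTo φ V U)
    (hξ₀ : DifferentiableOn ℝ ξ₀ U) (hη₀ : DifferentiableOn ℝ η₀ U)
    (hr₀ : DifferentiableOn ℝ r₀ U) (hφ : DifferentiableOn ℝ φ V)
    (hpot : ∀ ν ∈ U,
      wirtDbar (fun w => (r₀ w : ℂ)) ν =
        2 * (η₀ ν * wirtDbar (fun w => conj (ξ₀ w)) ν + conj (η₀ ν) * wirtDbar ξ₀ ν) /
          (1 + ξ₀ ν * conj (ξ₀ ν)) ^ 2) :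
    ∀ ν ∈ V,
      wirtDbar (fun w => (r₀ (φ w) : ℂ)) ν =
        2 * (η₀ (φ ν) * wirtDbar (fun w => conj (ξ₀ (φ w))) ν +
            conj (η₀ (φ ν)) * wirtDbar (fun w => ξ₀ (φ w)) ν) /
          (1 + ξ₀ (φ ν) * conj (ξ₀ (φ ν))) ^ 2 := by
  intro ν hν
  have hu : φ ν ∈ U := hφmaps hν
  have hφAt : DifferentiableAt ℝ φ ν := hφ.differentiableAt (hV.mem_nhds hν)
  have hξAt : DifferentiableAt ℝ ξ₀ (φ ν) := hξ₀.differentiableAt (hU.mem_nhds hu)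
  have hrAt : DifferentiableAt ℝ r₀ (φ ν) := hr₀.differentiableAt (hU.mem_nhds hu)
  have hrC : DifferentiableAt ℝ (fun w => ((r₀ w : ℝ) : ℂ)) (φ ν) :=
    Complex.ofRealCLM.differentiableAt.comp _ hrAt
  have hξconj : DifferentiableAt ℝ (fun w => conj (ξ₀ w)) (φ ν) :=
    (Complex.conjCLE.differentiableAt).comp _ hξAt
  have e1 := wirt_comp (g := fun w => ((r₀ w : ℝ) : ℂ)) hrC hφAt
  have e2 := wirt_comp (g := fun w => conj (ξ₀ w)) hξconj hφAt
  have e3 := wirt_comp (g := ξ₀) hξAt hφAt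
  rw [e1, e2, e3, wirtD_real hrAt, wirtD_conj hξAt, wirtDbar_conj hξAt,
    hpot (φ ν) hu, wirtDbar_conj hξAt]
  simp only [map_div₀, map_mul, map_add, map_one, map_ofNat, Complex.conj_conj, map_pow]
  ring
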